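/- arXiv:2306.17687 — 3 statements merged into one kernel-verified Lean document; each statement's English description precedes it below -/
import Mathlib

section
/- (Intertwining of Op with the Schrödinger representation of the crossed product.) Let g : ℝⁿ → C_b(ℝⁿ) be Bochner integrable, f its symbol, and T an Op-operator for g. Then for every Schwartz function u and almost every ξ ∈ ℝⁿ, (𝓕(Tu))(ξ) = ∫_{ℝⁿ} g(ξ−η)(η) (𝓕u)(η) dη; that is, conjugation by the Fourier transform carries T into the integral operator with kernel (ξ,η) ↦ g(ξ−η)(η). -/
open MeasureTheory Filter Complex

noncomputable section

/-- `ℝⁿ` as a Euclidean (inner product) space. -/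
abbrev En (n : ℕ) := EuclideanSpace ℝ (Fin n)

/-- Bounded uniformly continuous complex functions. -/
def BCu {n : ℕ} (ψ : En n → ℂ) : Prop :=
  Bornology.IsBounded (Set.range ψ) ∧ UniformContinuous ψ

/-- Continuous functions vanishing at infinity. -/
def C0 {n : ℕ} (φ : En n → ℂ) : Prop :=
  Continuous φ ∧ Tendsto φ (cocompact (En n)) (nhds 0)

/-- Vanishing oscillation functions: bounded uniformly continuous functions all of whose
translation differences vanish at infinity. -/
def VO {n : ℕ} (ψ : En n → ℂ) : Prop :=
  BCu ψ ∧ ∀ ζ : En n, C0 (fun ξ => ψ (ξ + ζ) - ψ ξ)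

/-- The symbol `f(x,ξ) = ∫ e^{2πi x·η} g(η)(ξ) dη` of a Bochner-integrable
`g : ℝⁿ → C_b(ℝⁿ)`. -/
def symbol {n : ℕ} (g : En n → BoundedContinuousFunction (En n) ℂ) (x ξ : En n) : ℂ :=
  ∫ η : En n, Complex.exp (2 * Real.pi * Complex.I * ((inner ℝ x η : ℝ) : ℂ)) * g η ξ

/-- `T` is an Op-operator for `g` : for every Schwartz function `u` (viewed as an element of
`L²(ℝⁿ)`) and almost every `x`, `(Tu)(x) = ∫ e^{2πi x·ξ} f(x,ξ) (𝓕u)(ξ) dξ`, where `f` is the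
symbol of `g` and `𝓕` is the Fourier transform. -/
def IsOpOperator {n : ℕ} (g : En n → BoundedContinuousFunction (En n) ℂ)
    (T : Lp ℂ 2 (volume : Measure (En n)) →L[ℂ] Lp ℂ 2 (volume : Measure (En n))) : Prop :=
  ∀ u : SchwartzMap (En n) ℂ, ∀ v : Lp ℂ 2 (volume : Measure (En n)),
    (⇑v =ᵐ[volume] ⇑u) →
    ∀ᵐ x : En n,
      (T v : En n → ℂ) x =
        ∫ ξ : En n, Complex.exp (2 * Real.pi * Complex.I * ((inner ℝ x ξ : ℝ) : ℂ)) *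
          symbol g x ξ * VectorFourier.fourierIntegral Real.fourierChar volume (innerₗ (En n)) (⇑u) ξ

/-- A character of the subalgebra `{ψ | ψ ∈ A}` of functions that vanishes on `I`.
(Only the values of `σ` on `A` are constrained.) -/
def IsCharacter {n : ℕ} (A I : Set (En n → ℂ)) (σ : (En n → ℂ) → ℂ) : Prop :=
  (∀ ψ φ, ψ ∈ A → φ ∈ A → σ (ψ + φ) = σ ψ + σ φ) ∧
  (∀ (c : ℂ) ψ, ψ ∈ A → σ (c • ψ) = c * σ ψ) ∧
  (∀ ψ φ, ψ ∈ A → φ ∈ A → σ (ψ * φ) = σ ψ * σ φ) ∧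
  σ 1 = 1 ∧
  (∀ j, j ∈ I → σ j = 0)

/-- A character of `VO(ℝⁿ)` supported at infinity. -/
def IsVOCharacterAtInfinity {n : ℕ} (σ : (En n → ℂ) → ℂ) : Prop :=
  IsCharacter {ψ | VO ψ} {φ | C0 φ} σ

/-!
Unfolding the symbol, `(Tu)(x) = ∫∫ e^{2πi x·(ξ+η)} g(η)(ξ) 𝓕u(ξ) dη dξ`. The substitution
`ζ = ξ + η` and Fubini (the integrand is dominated by `‖g(ζ - ξ)‖ |𝓕u(ξ)|`, integrable on the
product) turn this into `𝓕⁻¹K(x)` with `K(ζ) = ∫ g(ζ - ξ)(ξ) 𝓕u(ξ) dξ`. This `K` is integrable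
and bounded, hence in `L²`, and the unitary extension `U` of `𝓕` sends `𝓕⁻¹K` back to `K`: by the
multiplication formula `∫ conj (𝓕w) K = ∫ conj w 𝓕⁻¹K`, both have the same inner product with
every Schwartz function `w`, and Schwartz functions are dense in `L²`.
-/

open scoped Real FourierTransform RealInnerProductSpace ComplexConjugate BoundedContinuousFunction
  SchwartzMap

section Kernel

variable {G : Type*} [NormedAddCommGroup G] [MeasurableSpace G] [BorelSpace G]

def kernelIntegral (g : G → G →ᵇ ℂ) (W : G → ℂ) (μ : Measure G) (ξ : G) : ℂ :=
  ∫ η, g (ξ - η) η * W η ∂μ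

variable {μ : Measure G} [μ.IsAddLeftInvariant] {g : G → G →ᵇ ℂ} {W : G → ℂ}

theorem norm_kernelIntegral_le [μ.IsNegInvariant] (hg : Integrable g μ) {C : ℝ}
    (hC : ∀ η, ‖W η‖ ≤ C) (ξ : G) :
    ‖kernelIntegral g W μ ξ‖ ≤ (∫ a, ‖g a‖ ∂μ) * C := by
  calc ‖kernelIntegral g W μ ξ‖ ≤ ∫ η, ‖g (ξ - η)‖ * C ∂μ :=
        norm_integral_le_of_norm_le ((hg.norm.comp_sub_left ξ).mul_const C) <|
          ae_of_all _ fun η => by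
            rw [norm_mul]
            exact mul_le_mul ((g _).norm_coe_le_norm _) (hC η) (norm_nonneg _) (norm_nonneg _)
    _ = (∫ a, ‖g a‖ ∂μ) * C := by
        rw [integral_mul_const, integral_sub_left_eq_self (fun a => ‖g a‖) μ ξ]

variable [SecondCountableTopology G] [SFinite μ]

theorem aestronglyMeasurable_eval_sub (hg : AEStronglyMeasurable g μ) :
    AEStronglyMeasurable (fun p : G × G => g (p.1 - p.2) p.2) (μ.prod μ) :=
  continuous_eval.comp_aestronglyMeasurable <|
    (hg.comp_quasiMeasurePreserving (quasiMeasurePreserving_sub_of_right_invariant μ μ)).prodMk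
      measurable_snd.aestronglyMeasurable

theorem integrable_eval_sub_mul (hg : Integrable g μ) (hW : Integrable W μ) :
    Integrable (fun p : G × G => g (p.1 - p.2) p.2 * W p.2) (μ.prod μ) := by
  refine (hW.norm.convolution_integrand (ContinuousLinearMap.mul ℝ ℝ) hg.norm).mono'
    ((aestronglyMeasurable_eval_sub hg.1).mul hW.1.comp_snd) (ae_of_all _ fun p => ?_)
  rw [norm_mul, mul_comm]
  exact mul_le_mul_of_nonneg_left ((g _).norm_coe_le_norm _) (norm_nonneg _)

theorem integrable_kernelIntegral (hg : Integrable g μ) (hW : Integrable W μ) :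
    Integrable (kernelIntegral g W μ) μ :=
  (integrable_eval_sub_mul hg hW).integral_prod_left

end Kernel

theorem memLp_two_of_integrable_of_bound {α E : Type*} [MeasurableSpace α] {μ : Measure α}
    [NormedAddCommGroup E] {f : α → E} (hf : Integrable f μ) {C : ℝ}
    (hC : ∀ x, ‖f x‖ ≤ C) : MemLp f 2 μ := by
  refine (memLp_two_iff_integrable_sq_norm hf.1).2 <|
    (hf.norm.const_mul C).mono' (hf.1.norm.pow 2) (ae_of_all _ fun x => ?_)
  rw [Real.norm_of_nonneg (by positivity), sq]
  exact mul_le_mul_of_nonneg_right (hC x) (norm_nonneg _)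

section Character

variable {V : Type*} [NormedAddCommGroup V] [InnerProductSpace ℝ V]

theorem exp_two_pi_I_inner_add (x ξ η : V) :
    Complex.exp (2 * π * I * ⟪x, ξ⟫) * Complex.exp (2 * π * I * ⟪x, η⟫) =
      Complex.exp (2 * π * I * ⟪x, ξ + η⟫) := by
  rw [← Complex.exp_add, inner_add_right]
  push_cast
  ring_nf

theorem norm_exp_two_pi_I_inner (x ξ : V) : ‖Complex.exp (2 * π * I * ⟪x, ξ⟫)‖ = 1 := by
  rw [show 2 * π * I * ⟪x, ξ⟫ = ((2 * π * ⟪x, ξ⟫ : ℝ) : ℂ) * I by push_cast; ring]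
  exact Complex.norm_exp_ofReal_mul_I _

end Character

section Fourier

variable {V : Type*} [NormedAddCommGroup V] [InnerProductSpace ℝ V] [FiniteDimensional ℝ V]
  [MeasurableSpace V] [BorelSpace V]

theorem integral_conj_fourier_mul_eq {f k : V → ℂ} (hf : Integrable f) (hk : Integrable k) :
    ∫ ξ, conj (𝓕 f ξ) * k ξ = ∫ x, conj (f x) * 𝓕⁻ k x := by
  have h := VectorFourier.integral_sesq_fourierIntegral_eq_neg_flip (innerSL ℂ) (L := innerₗ V)
    Real.continuous_fourierChar continuous_inner hf hk
  simp only [innerSL_apply_apply, RCLike.inner_apply', flip_innerₗ] at h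
  exact h

theorem apply_ae_eq_of_ae_eq_fourierInv
    (U : Lp ℂ 2 (volume : Measure V) ≃ₗᵢ[ℂ] Lp ℂ 2 (volume : Measure V))
    (hU : ∀ w : 𝓢(V, ℂ), ⇑(U (w.toLp 2)) =ᵐ[volume] 𝓕 ⇑w)
    {K : V → ℂ} (hK₁ : Integrable K) (hK₂ : MemLp K 2) {y : Lp ℂ 2 (volume : Measure V)}
    (hy : ⇑y =ᵐ[volume] 𝓕⁻ K) : ⇑(U y) =ᵐ[volume] K := by
  have hyK : y = U.symm (hK₂.toLp K) := by
    refine (SchwartzMap.denseRange_toLpCLM (F := ℂ) (p := 2) (μ := volume)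
      ENNReal.ofNat_ne_top).eq_of_inner_right ℂ fun w => ?_
    calc inner ℂ (w.toLp 2) y = ∫ x, conj (w x) * 𝓕⁻ K x := by
          rw [L2.inner_def]
          refine integral_congr_ae ?_
          filter_upwards [w.coeFn_toLp 2, hy] with x hwx hyx
          rw [RCLike.inner_apply', hwx, hyx]
      _ = ∫ ξ, conj (𝓕 ⇑w ξ) * K ξ := (integral_conj_fourier_mul_eq w.integrable hK₁).symm
      _ = inner ℂ (U (w.toLp 2)) (hK₂.toLp K) := by
          rw [L2.inner_def]
          refine integral_congr_ae ?_
          filter_upwards [hU w, hK₂.coeFn_toLp] with ξ hwξ hKξ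
          rw [RCLike.inner_apply', hwξ, hKξ]
      _ = inner ℂ (w.toLp 2) (U.symm (hK₂.toLp K)) := U.inner_map_eq_flip _ _
  rw [hyK, U.apply_symm_apply]
  exact hK₂.coeFn_toLp

theorem integral_exp_mul_symbol_mul_eq_fourierInv {g : V → V →ᵇ ℂ} {W : V → ℂ}
    (hg : Integrable g) (hW : Integrable W) (x : V) :
    ∫ ξ, Complex.exp (2 * π * I * ⟪x, ξ⟫) *
        (∫ η, Complex.exp (2 * π * I * ⟪x, η⟫) * g η ξ) * W ξ =
      𝓕⁻ (kernelIntegral g W volume) x := by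
  set e : V → ℂ := fun ζ => Complex.exp (2 * π * I * ⟪x, ζ⟫) with he
  have hslice : ∀ ξ, e ξ * (∫ η, e η * g η ξ) * W ξ = ∫ ζ, e ζ * (g (ζ - ξ) ξ * W ξ) := by
    intro ξ
    calc e ξ * (∫ η, e η * g η ξ) * W ξ = ∫ η, e (ξ + η) * (g (ξ + η - ξ) ξ * W ξ) := by
          rw [← integral_const_mul, ← integral_mul_const]
          congr 1 with η
          simp only [he, add_sub_cancel_left, ← exp_two_pi_I_inner_add]
          ring
      _ = ∫ ζ, e ζ * (g (ζ - ξ) ξ * W ξ) :=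
          integral_add_left_eq_self (fun ζ => e ζ * (g (ζ - ξ) ξ * W ξ)) ξ
  have he_cont : Continuous e := by fun_prop
  have hF : Integrable (fun p : V × V => e p.2 * (g (p.2 - p.1) p.1 * W p.1)) :=
    (integrable_eval_sub_mul hg hW).swap.bdd_mul (c := 1)
      (he_cont.comp continuous_snd).aestronglyMeasurable
      (ae_of_all _ fun p => (norm_exp_two_pi_I_inner x p.2).le)
  calc ∫ ξ, e ξ * (∫ η, e η * g η ξ) * W ξ
      = ∫ ξ, ∫ ζ, e ζ * (g (ζ - ξ) ξ * W ξ) := by simp_rw [hslice]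
    _ = ∫ ζ, ∫ ξ, e ζ * (g (ζ - ξ) ξ * W ξ) := integral_integral_swap hF
    _ = ∫ ζ, e ζ * kernelIntegral g W volume ζ := by simp_rw [integral_const_mul]; rfl
    _ = 𝓕⁻ (kernelIntegral g W volume) x := by
        rw [Real.fourierInv_eq']
        congr 1 with ζ
        simp only [he, real_inner_comm x, smul_eq_mul]
        push_cast
        ring_nf

end Fourier

theorem op_operator_fourier_conjugation_general
    (n : ℕ)
    (g : En n → BoundedContinuousFunction (En n) ℂ)
    (hg : Integrable g (volume : Measure (En n)))
    (T : Lp ℂ 2 (volume : Measure (En n)) →L[ℂ] Lp ℂ 2 (volume : Measure (En n)))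
    (hT : IsOpOperator g T)
    -- `U` is the Fourier transform, extended unitarily to `L²(ℝⁿ)`
    (U : Lp ℂ 2 (volume : Measure (En n)) ≃ₗᵢ[ℂ] Lp ℂ 2 (volume : Measure (En n)))
    (hU : ∀ u : SchwartzMap (En n) ℂ, ∀ v : Lp ℂ 2 (volume : Measure (En n)),
      (⇑v =ᵐ[volume] ⇑u) → (⇑(U v) =ᵐ[volume] VectorFourier.fourierIntegral Real.fourierChar volume (innerₗ (En n)) (⇑u))) :
    ∀ u : SchwartzMap (En n) ℂ, ∀ v : Lp ℂ 2 (volume : Measure (En n)),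
      (⇑v =ᵐ[volume] ⇑u) →
      ∀ᵐ ξ : En n,
        (U (T v) : En n → ℂ) ξ =
          ∫ η : En n, g (ξ - η) η * VectorFourier.fourierIntegral Real.fourierChar volume (innerₗ (En n)) (⇑u) η := by
  intro u v hv
  have hW : Integrable (𝓕 ⇑u) := SchwartzMap.fourier_coe u ▸ (𝓕 u).integrable
  have hK₁ := integrable_kernelIntegral hg hW
  have hK₂ : MemLp (kernelIntegral g (𝓕 ⇑u) volume) 2 := memLp_two_of_integrable_of_bound hK₁
    (norm_kernelIntegral_le hg (SchwartzMap.norm_fourier_apply_le_toLp_one u))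
  have hTv : ⇑(T v) =ᵐ[volume] 𝓕⁻ (kernelIntegral g (𝓕 ⇑u) volume) := by
    filter_upwards [hT u v hv] with x hx
    rw [hx]
    exact integral_exp_mul_symbol_mul_eq_fourierInv hg hW x
  exact apply_ae_eq_of_ae_eq_fourierInv U (fun w => hU w _ (w.coeFn_toLp 2)) hK₁ hK₂ hTv

theorem op_operator_fourier_conjugation
    (n : ℕ) (hn : 1 ≤ n)
    (g : En n → BoundedContinuousFunction (En n) ℂ)
    (hg : Integrable g (volume : Measure (En n)))
    (T : Lp ℂ 2 (volume : Measure (En n)) →L[ℂ] Lp ℂ 2 (volume : Measure (En n)))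
    (hT : IsOpOperator g T)
    -- `U` is the Fourier transform, extended unitarily to `L²(ℝⁿ)`
    (U : Lp ℂ 2 (volume : Measure (En n)) ≃ₗᵢ[ℂ] Lp ℂ 2 (volume : Measure (En n)))
    (hU : ∀ u : SchwartzMap (En n) ℂ, ∀ v : Lp ℂ 2 (volume : Measure (En n)),
      (⇑v =ᵐ[volume] ⇑u) → (⇑(U v) =ᵐ[volume] VectorFourier.fourierIntegral Real.fourierChar volume (innerₗ (En n)) (⇑u))) :
    ∀ u : SchwartzMap (En n) ℂ, ∀ v : Lp ℂ 2 (volume : Measure (En n)),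
      (⇑v =ᵐ[volume] ⇑u) →
      ∀ᵐ ξ : En n,
        (U (T v) : En n → ℂ) ξ =
          ∫ η : En n, g (ξ - η) η * VectorFourier.fourierIntegral Real.fourierChar volume (innerₗ (En n)) (⇑u) η :=
  op_operator_fourier_conjugation_general n g hg T hT U hU
end
end

section
/- Let J be an admissible C*-subalgebra of BC_u(ℝⁿ): a norm-closed, conjugation-closed subalgebra of BC_u(ℝⁿ), invariant under all translations, containing C_0(ℝⁿ). Let ψ : ℝⁿ → ℂ be bounded and differentiable, and suppose each partial derivative ∂_jψ (j = 1,…,n) belongs to J. Then ψ is bounded and uniformly continuous, and for every ζ ∈ ℝⁿ the function ξ ↦ ψ(ξ+ζ) − ψ(ξ) belongs to J (that is, ψ ∈ J̃ := {ψ ∈ BC_u(ℝⁿ) : ∀ζ, τ_ζψ − ψ ∈ J}). -/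
/-!
By the gradient theorem, `ψ (ξ + ζ) - ψ ξ = ∫₀¹ ∂_ζψ (ξ + tζ) dt`, and the directional
derivative `∂_ζψ = ∑ ζ_j ∂_jψ` lies in `J`. As `∂_ζψ` is uniformly continuous,
`t ↦ τ_{tζ} ∂_ζψ` is a continuous curve in the closed convex set of bounded continuous functions
belonging to `J`, so its Bochner integral belongs to `J` as well; evaluation at `ξ` commutes
with this integral. Uniform continuity of `ψ` itself comes from the bounded partial
derivatives, which make `ψ` Lipschitz.
-/

open MeasureTheory Filter Complex

noncomputable section

open Set
open scoped BoundedContinuousFunction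

section PartialDerivatives

variable {ι F : Type*} [Fintype ι] [DecidableEq ι] [NormedAddCommGroup F] [NormedSpace ℝ F]

theorem ContinuousLinearMap.apply_eq_sum_apply_single (L : EuclideanSpace ℝ ι →L[ℝ] F)
    (v : EuclideanSpace ℝ ι) : L v = ∑ j, v j • L (EuclideanSpace.single j 1) := by
  conv_lhs => rw [← (EuclideanSpace.basisFun ι ℝ).toBasis.sum_repr v]
  simp [map_sum, map_smul]

theorem ContinuousLinearMap.opNNNorm_le_sum_nnnorm_apply_single
    (L : EuclideanSpace ℝ ι →L[ℝ] F) : ‖L‖₊ ≤ ∑ j, ‖L (EuclideanSpace.single j 1)‖₊ :=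
  L.opNNNorm_le_bound _ fun v => by
    rw [L.apply_eq_sum_apply_single v, Finset.sum_mul]
    refine (nnnorm_sum_le _ _).trans (Finset.sum_le_sum fun j _ => ?_)
    rw [nnnorm_smul, mul_comm]
    gcongr
    exact PiLp.nnnorm_apply_le v j

theorem uniformContinuous_of_isBounded_range_partialDeriv {ψ : EuclideanSpace ℝ ι → F}
    (hψ : Differentiable ℝ ψ)
    (hbdd : ∀ j, Bornology.IsBounded (range fun x => fderiv ℝ ψ x (EuclideanSpace.single j 1))) :
    UniformContinuous ψ := by
  choose C hC using fun j => isBounded_iff_forall_norm_le.1 (hbdd j)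
  refine (lipschitzWith_of_nnnorm_fderiv_le hψ (C := ∑ j, (C j).toNNReal)
    fun x => ?_).uniformContinuous
  refine (fderiv ℝ ψ x).opNNNorm_le_sum_nnnorm_apply_single.trans (Finset.sum_le_sum fun j _ => ?_)
  rw [← NNReal.coe_le_coe, coe_nnnorm]
  exact (hC j _ (mem_range_self x)).trans (Real.le_coe_toNNReal _)

theorem fderiv_apply_mem_of_partialDeriv_mem {ψ : EuclideanSpace ℝ ι → F}
    (S : Submodule ℝ (EuclideanSpace ℝ ι → F))
    (h : ∀ j, (fun x => fderiv ℝ ψ x (EuclideanSpace.single j 1)) ∈ S) (v : EuclideanSpace ℝ ι) :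
    (fun x => fderiv ℝ ψ x v) ∈ S := by
  have hsum : (fun x => fderiv ℝ ψ x v) =
      ∑ j, v j • fun x => fderiv ℝ ψ x (EuclideanSpace.single j 1) := by
    ext x
    rw [(fderiv ℝ ψ x).apply_eq_sum_apply_single v, Finset.sum_apply]
    rfl
  rw [hsum]
  exact S.sum_mem fun j _ => S.smul_mem _ (h j)

end PartialDerivatives

theorem sub_eq_intervalIntegral_fderiv {E F : Type*} [NormedAddCommGroup E] [NormedSpace ℝ E]
    [NormedAddCommGroup F] [NormedSpace ℝ F] [CompleteSpace F] {ψ : E → F}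
    (hψ : Differentiable ℝ ψ) (x v : E) (hcont : Continuous fun t : ℝ => fderiv ℝ ψ (x + t • v) v) :
    ψ (x + v) - ψ x = ∫ t in (0 : ℝ)..1, fderiv ℝ ψ (x + t • v) v := by
  have hderiv (t : ℝ) :
      HasDerivAt (fun t : ℝ => ψ (x + t • v)) (fderiv ℝ ψ (x + t • v) v) t := by
    have := (hψ _).hasFDerivAt.comp_hasDerivAt t (((hasDerivAt_id t).smul_const v).const_add x)
    simpa [Function.comp_def] using this
  rw [intervalIntegral.integral_eq_sub_of_hasDerivAt (fun t _ => hderiv t)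
    (hcont.intervalIntegrable 0 1)]
  simp

theorem Convex.intervalIntegral_zero_one_mem {E : Type*} [NormedAddCommGroup E]
    [NormedSpace ℝ E] [CompleteSpace E] {s : Set E} (hs : Convex ℝ s) (hsc : IsClosed s)
    {γ : ℝ → E} (hγ : ContinuousOn γ (Icc 0 1)) (hmem : ∀ t ∈ Icc (0 : ℝ) 1, γ t ∈ s) :
    ∫ t in (0 : ℝ)..1, γ t ∈ s := by
  have : IsProbabilityMeasure (volume.restrict (Ioc (0 : ℝ) 1)) := ⟨by simp⟩
  rw [intervalIntegral.integral_of_le zero_le_one]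
  exact hs.integral_mem hsc
    ((ae_restrict_mem measurableSet_Ioc).mono fun t ht => hmem t (Ioc_subset_Icc_self ht))
    (hγ.integrableOn_Icc.mono_set Ioc_subset_Icc_self)

namespace BoundedContinuousFunction

theorem intervalIntegral_apply {α β : Type*} [TopologicalSpace α] [NormedAddCommGroup β]
    [NormedSpace ℝ β] [CompleteSpace β] {γ : ℝ → α →ᵇ β} {a b : ℝ}
    (hγ : IntervalIntegrable γ volume a b) (x : α) :
    (∫ t in a..b, γ t) x = ∫ t in a..b, γ t x :=
  ((evalCLM ℝ x).intervalIntegral_comp_comm hγ).symm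

theorem uniformContinuous_compContinuous_addRight {E β : Type*} [SeminormedAddCommGroup E]
    [PseudoMetricSpace β] (g : E →ᵇ β) (hg : UniformContinuous g) :
    UniformContinuous fun η : E => g.compContinuous (ContinuousMap.addRight η) := by
  rw [Metric.uniformContinuous_iff] at hg ⊢
  intro ε hε
  obtain ⟨δ, hδ, hg⟩ := hg (ε / 2) (half_pos hε)
  refine ⟨δ, hδ, fun {η η'} h => ?_⟩
  refine lt_of_le_of_lt ((dist_le (half_pos hε).le).2 fun ξ => (hg ?_).le) (half_lt_self hε)
  simpa using h

end BoundedContinuousFunction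

theorem translate_sub_self_mem_of_translate_fderiv_mem {E F : Type*} [NormedAddCommGroup E]
    [NormedSpace ℝ E] [NormedAddCommGroup F] [NormedSpace ℝ F] [CompleteSpace F] {s : Set (E → F)}
    (hconv : Convex ℝ {φ : E →ᵇ F | ⇑φ ∈ s}) (hclosed : IsClosed {φ : E →ᵇ F | ⇑φ ∈ s})
    {ψ : E → F} (hψ : Differentiable ℝ ψ) (ζ : E)
    (hbdd : Bornology.IsBounded (range fun ξ => fderiv ℝ ψ ξ ζ))
    (huc : UniformContinuous fun ξ => fderiv ℝ ψ ξ ζ)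
    (htrans : ∀ η, (fun ξ => fderiv ℝ ψ (ξ + η) ζ) ∈ s) :
    (fun ξ => ψ (ξ + ζ) - ψ ξ) ∈ s := by
  obtain ⟨C, hC⟩ := Metric.isBounded_range_iff.1 hbdd
  set g : E →ᵇ F := .mkOfBound ⟨_, huc.continuous⟩ C hC
  set γ : ℝ → E →ᵇ F := fun t => g.compContinuous (ContinuousMap.addRight (t • ζ))
  have hγ : Continuous γ := (g.uniformContinuous_compContinuous_addRight huc).continuous.comp
    (continuous_id.smul continuous_const)
  have hmem : ∫ t in (0 : ℝ)..1, γ t ∈ {φ : E →ᵇ F | ⇑φ ∈ s} :=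
    hconv.intervalIntegral_zero_one_mem hclosed hγ.continuousOn fun t _ => htrans (t • ζ)
  suffices h : ⇑(∫ t in (0 : ℝ)..1, γ t) = fun ξ => ψ (ξ + ζ) - ψ ξ from h ▸ hmem
  ext ξ
  rw [BoundedContinuousFunction.intervalIntegral_apply (hγ.intervalIntegrable 0 1)]
  exact (sub_eq_intervalIntegral_fderiv hψ ξ ζ
    ((BoundedContinuousFunction.evalCLM ℝ ξ).continuous.comp hγ)).symm

theorem mem_Jtilde_of_partial_derivatives_mem_general
    (n : ℕ)
    (J : Set (En n → ℂ))
    (hJsub : ∀ ψ ∈ J, BCu ψ)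
    (hJclosed : IsClosed {φ : BoundedContinuousFunction (En n) ℂ | ⇑φ ∈ J})
    (hJadd : ∀ ψ ∈ J, ∀ φ ∈ J, ψ + φ ∈ J)
    (hJsmul : ∀ (c : ℂ), ∀ ψ ∈ J, c • ψ ∈ J)
    (hJtrans : ∀ ψ ∈ J, ∀ η : En n, (fun ξ => ψ (ξ + η)) ∈ J)
    (hJC0 : ∀ φ : En n → ℂ, C0 φ → φ ∈ J)
    (ψ : En n → ℂ)
    (hψbdd : Bornology.IsBounded (Set.range ψ))
    (hψdiff : Differentiable ℝ ψ)
    (hψderiv : ∀ j : Fin n, (fun ξ => fderiv ℝ ψ ξ (EuclideanSpace.single j (1 : ℝ))) ∈ J) :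
    BCu ψ ∧ ∀ ζ : En n, (fun ξ => ψ (ξ + ζ) - ψ ξ) ∈ J := by
  let S : Submodule ℂ (En n → ℂ) :=
    { carrier := J
      add_mem' := fun hφ hφ' => hJadd _ hφ _ hφ'
      zero_mem' := hJC0 0 ⟨continuous_const, tendsto_const_nhds⟩
      smul_mem' := hJsmul }
  have hconv : Convex ℝ {φ : En n →ᵇ ℂ | ⇑φ ∈ J} := fun φ hφ φ' hφ' a b _ _ _ =>
    S.add_mem (S.smul_of_tower_mem a hφ) (S.smul_of_tower_mem b hφ')
  have hdir (ζ : En n) : (fun ξ => fderiv ℝ ψ ξ ζ) ∈ J :=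
    fderiv_apply_mem_of_partialDeriv_mem (S.restrictScalars ℝ) hψderiv ζ
  refine ⟨⟨hψbdd, uniformContinuous_of_isBounded_range_partialDeriv hψdiff
    fun j => (hJsub _ (hψderiv j)).1⟩, fun ζ => ?_⟩
  obtain ⟨hbdd, huc⟩ := hJsub _ (hdir ζ)
  exact translate_sub_self_mem_of_translate_fderiv_mem hconv hJclosed hψdiff ζ hbdd huc
    fun η => hJtrans _ (hdir ζ) η

theorem mem_Jtilde_of_partial_derivatives_mem
    (n : ℕ)
    (J : Set (En n → ℂ))
    (hJsub : ∀ ψ ∈ J, BCu ψ)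
    (hJclosed : IsClosed {φ : BoundedContinuousFunction (En n) ℂ | ⇑φ ∈ J})
    (hJconj : ∀ ψ ∈ J, (fun ξ => starRingEnd ℂ (ψ ξ)) ∈ J)
    (hJadd : ∀ ψ ∈ J, ∀ φ ∈ J, ψ + φ ∈ J)
    (hJsmul : ∀ (c : ℂ), ∀ ψ ∈ J, c • ψ ∈ J)
    (hJmul : ∀ ψ ∈ J, ∀ φ ∈ J, ψ * φ ∈ J)
    (hJtrans : ∀ ψ ∈ J, ∀ η : En n, (fun ξ => ψ (ξ + η)) ∈ J)
    (hJC0 : ∀ φ : En n → ℂ, C0 φ → φ ∈ J)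
    (ψ : En n → ℂ)
    (hψbdd : Bornology.IsBounded (Set.range ψ))
    (hψdiff : Differentiable ℝ ψ)
    (hψderiv : ∀ j : Fin n, (fun ξ => fderiv ℝ ψ ξ (EuclideanSpace.single j (1 : ℝ))) ∈ J) :
    BCu ψ ∧ ∀ ζ : En n, (fun ξ => ψ (ξ + ζ) - ψ ξ) ∈ J :=
  mem_Jtilde_of_partial_derivatives_mem_general n J hJsub hJclosed hJadd hJsmul hJtrans hJC0 ψ hψbdd
    hψdiff hψderiv
end
end

section
/- Let ψ : ℝⁿ → ℂ be bounded and differentiable, and suppose there is a constant C > 0 with ‖∇ψ(ξ)‖ ≤ C(1+‖ξ‖)^{−1} for all ξ ∈ ℝⁿ. Then ψ has vanishing oscillation: ψ is bounded and uniformly continuous, and for every ζ ∈ ℝⁿ the function ξ ↦ ψ(ξ+ζ) − ψ(ξ) belongs to C_0(ℝⁿ), i.e. ψ ∈ VO(ℝⁿ). -/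
open MeasureTheory Filter Complex

noncomputable section

/-! The gradient bound `C (1 + ‖x‖)⁻¹ ≤ C` makes `ψ` globally `C`-Lipschitz. Moreover, on the
ball of radius `‖ζ‖` around `ξ` the gradient is at most `C (1 + ‖ξ‖ - ‖ζ‖)⁻¹`, so the mean value
inequality gives `‖ψ (ξ + ζ) - ψ ξ‖ ≤ C ‖ζ‖ (1 + ‖ξ‖ - ‖ζ‖)⁻¹`, which tends to `0` as
`‖ξ‖ → ∞`. -/

open Metric Bornology Topology

section GradientDecay

variable {E F : Type*} [NormedAddCommGroup E] [NormedSpace ℝ E]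
  [NormedAddCommGroup F] [NormedSpace ℝ F] {f : E → F} {C : ℝ}

lemma norm_fderiv_le_of_le_norm (hgrad : ∀ x, ‖fderiv ℝ f x‖ ≤ C * (1 + ‖x‖)⁻¹)
    {x : E} {r : ℝ} (hr : r ≤ ‖x‖) (hr₀ : 0 < 1 + r) :
    ‖fderiv ℝ f x‖ ≤ C * (1 + r)⁻¹ := by
  have hC : 0 ≤ C := by simpa using (norm_nonneg _).trans (hgrad 0)
  calc ‖fderiv ℝ f x‖ ≤ C * (1 + ‖x‖)⁻¹ := hgrad x
    _ ≤ C * (1 + r)⁻¹ := by gcongr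

lemma lipschitzWith_of_norm_fderiv_le_mul_inv_one_add (hf : Differentiable ℝ f)
    (hgrad : ∀ x, ‖fderiv ℝ f x‖ ≤ C * (1 + ‖x‖)⁻¹) : LipschitzWith C.toNNReal f :=
  lipschitzWith_of_nnnorm_fderiv_le hf fun x => by
    rw [← NNReal.coe_le_coe, coe_nnnorm, Real.coe_toNNReal']
    exact (norm_fderiv_le_of_le_norm hgrad (norm_nonneg x) (by norm_num)).trans (by simp)

lemma norm_add_sub_le_of_norm_fderiv_le_mul_inv_one_add (hf : Differentiable ℝ f)
    (hgrad : ∀ x, ‖fderiv ℝ f x‖ ≤ C * (1 + ‖x‖)⁻¹) {ξ ζ : E} (h : ‖ζ‖ ≤ ‖ξ‖) :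
    ‖f (ξ + ζ) - f ξ‖ ≤ C * (1 + (‖ξ‖ - ‖ζ‖))⁻¹ * ‖ζ‖ := by
  have hball : ∀ x ∈ closedBall ξ ‖ζ‖, ‖fderiv ℝ f x‖ ≤ C * (1 + (‖ξ‖ - ‖ζ‖))⁻¹ :=
    fun x hx => norm_fderiv_le_of_le_norm hgrad
      (by linarith [norm_sub_norm_le ξ x, mem_closedBall_iff_norm'.1 hx]) (by linarith)
  simpa using (convex_closedBall ξ ‖ζ‖).norm_image_sub_le_of_norm_fderiv_le
    (fun x _ => hf x) hball (mem_closedBall_self (norm_nonneg ζ))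
    (y := ξ + ζ) (by simp)

lemma tendsto_add_sub_cobounded_of_norm_fderiv_le_mul_inv_one_add (hf : Differentiable ℝ f)
    (hgrad : ∀ x, ‖fderiv ℝ f x‖ ≤ C * (1 + ‖x‖)⁻¹) (ζ : E) :
    Tendsto (fun ξ => f (ξ + ζ) - f ξ) (cobounded E) (𝓝 0) := by
  have hbound : Tendsto (fun r : ℝ => C * (1 + (r - ‖ζ‖))⁻¹ * ‖ζ‖) atTop (𝓝 0) := by
    have h : Tendsto (fun r : ℝ => 1 + (r - ‖ζ‖)) atTop atTop :=
      tendsto_atTop_add_const_left _ _ (tendsto_atTop_add_const_right _ _ tendsto_id)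
    simpa using ((tendsto_inv_atTop_zero.comp h).const_mul C).mul_const ‖ζ‖
  refine squeeze_zero_norm' ?_ (hbound.comp tendsto_norm_cobounded_atTop)
  filter_upwards [eventually_cobounded_le_norm ‖ζ‖] with ξ hξ
  exact norm_add_sub_le_of_norm_fderiv_le_mul_inv_one_add hf hgrad hξ

end GradientDecay

theorem vanishing_oscillation_of_gradient_decay_general
    (n : ℕ)
    (ψ : En n → ℂ)
    (hψbdd : Bornology.IsBounded (Set.range ψ))
    (hψdiff : Differentiable ℝ ψ)
    (C : ℝ)
    (hgrad : ∀ ξ : En n, ‖fderiv ℝ ψ ξ‖ ≤ C * (1 + ‖ξ‖)⁻¹) :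
    VO ψ := by
  have hlip := lipschitzWith_of_norm_fderiv_le_mul_inv_one_add hψdiff hgrad
  refine ⟨⟨hψbdd, hlip.uniformContinuous⟩, fun ζ => ⟨?_, ?_⟩⟩
  · exact (hψdiff.continuous.comp (continuous_add_const ζ)).sub hψdiff.continuous
  · rw [← cobounded_eq_cocompact]
    exact tendsto_add_sub_cobounded_of_norm_fderiv_le_mul_inv_one_add hψdiff hgrad ζ

theorem vanishing_oscillation_of_gradient_decay
    (n : ℕ)
    (ψ : En n → ℂ)
    (hψbdd : Bornology.IsBounded (Set.range ψ))
    (hψdiff : Differentiable ℝ ψ)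
    (C : ℝ) (hC : 0 < C)
    (hgrad : ∀ ξ : En n, ‖fderiv ℝ ψ ξ‖ ≤ C * (1 + ‖ξ‖)⁻¹) :
    VO ψ :=
  vanishing_oscillation_of_gradient_decay_general n ψ hψbdd hψdiff C hgrad
end
end
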